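/- arXiv:1904.05756 — 3 statements merged into one kernel-verified Lean document; each statement's English description precedes it below -/
import Mathlib

section
/- Let q be a prime with q ≡ 7 (mod 8), K = ℚ(√−q) with ring of integers O_K, let d > 1 be a squarefree positive integer, and let r be a prime not dividing 2dq such that the ideal r·O_K is prime (i.e. r is inert in K). Then the prime r·O_K of K splits in the quadratic extension K(√d)/K: its extension to the ring of integers of K(√d) is the product of two distinct prime ideals. -/
open NumberField Polynomial

private lemma aux_monic_eq {F : Type*} [Field F] {p q : F[X]}
    (hp : p.Monic) (hq : q.Monic) (hdvd : q ∣ p) (hdeg : p.natDegree ≤ q.natDegree) :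
    q = p := by
  obtain ⟨c, rfl⟩ := hdvd
  have hq0 : q ≠ 0 := hq.ne_zero
  have hc0 : c ≠ 0 := right_ne_zero_of_mul hp.ne_zero
  have hdeg' : (q * c).natDegree = q.natDegree + c.natDegree := natDegree_mul hq0 hc0
  have hc : c.natDegree = 0 := by omega
  have hcu : IsUnit c := by
    rw [Polynomial.eq_C_of_natDegree_eq_zero hc]
    exact isUnit_C.mpr (isUnit_iff_ne_zero.mpr (fun h => hc0 (by
      rw [Polynomial.eq_C_of_natDegree_eq_zero hc, h, map_zero])))
  exact Polynomial.eq_of_monic_of_associated hq hp ⟨hcu.unit, rfl⟩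

private lemma aux_li {F A : Type*} [Field F] [Field A] [Algebra F A] {v : A}
    (hv : v ∉ Set.range (algebraMap F A)) : LinearIndependent F ![(1 : A), v] := by
  rw [LinearIndependent.pair_iff]
  intro s t hst
  have ht : t = 0 := by
    by_contra ht
    refine hv ⟨-s / t, ?_⟩
    have h1 : t • v = (-s) • (1 : A) := by
      rw [neg_smul]
      exact eq_neg_of_add_eq_zero_right hst
    have h2 : v = (t⁻¹ * -s) • (1 : A) := by
      rw [mul_smul, ← h1, inv_smul_smul₀ ht]
    rw [h2, Algebra.smul_def, mul_one, div_eq_inv_mul]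
  subst ht
  rw [zero_smul, add_zero, smul_eq_zero] at hst
  exact ⟨hst.resolve_right one_ne_zero, rfl⟩

private lemma aux_span {F A : Type*} [Field F] [Field A] [Algebra F A]
    [FiniteDimensional F A] (h2 : Module.finrank F A = 2) {v : A}
    (hv : v ∉ Set.range (algebraMap F A)) :
    Submodule.span F ({1, v} : Set A) = ⊤ := by
  have hli := aux_li hv
  apply Submodule.eq_top_of_finrank_eq
  have hr : Set.range ![(1 : A), v] = {1, v} := by
    simp [Matrix.range_cons, Matrix.range_empty, Set.pair_comm]
  have := finrank_span_eq_card hli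
  rw [hr] at this
  rw [this, h2]
  rfl

private lemma aux_no_sqrt (K : Type*) [Field K] [NumberField K]
    (hdeg : Module.finrank ℚ K = 2) {q : ℕ} (hq : 0 < q) {α : K} (hα2 : α ^ 2 = -(q : K))
    {d : ℕ} (hd : Squarefree d) (hd1 : 1 < d) : ∀ c : K, c ^ 2 ≠ (d : K) := by
  intro c hc
  have hαQ : α ∉ Set.range (algebraMap ℚ K) := by
    rintro ⟨t, rfl⟩
    have h1 : (t ^ 2 : ℚ) = -(q : ℚ) := by
      apply (algebraMap ℚ K).injective
      rw [map_pow, map_neg, map_natCast]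
      exact hα2
    have h2 : (0 : ℚ) ≤ t ^ 2 := sq_nonneg t
    have h3 : (0 : ℚ) < (q : ℚ) := by exact_mod_cast hq
    linarith
  have hli := aux_li hαQ
  have hsp := aux_span hdeg hαQ
  have hc' : c ∈ Submodule.span ℚ ({1, α} : Set K) := hsp ▸ Submodule.mem_top
  obtain ⟨a, b, hab⟩ := Submodule.mem_span_pair.mp hc'
  have h1 : c = algebraMap ℚ K a + algebraMap ℚ K b * α := by
    rw [← hab]; simp [Algebra.smul_def]
  rw [h1] at hc
  have key : ((a ^ 2 - q * b ^ 2 - d : ℚ)) • (1 : K) + ((2 * a * b : ℚ)) • α = 0 := by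
    simp only [Algebra.smul_def, map_sub, map_mul, map_pow, map_natCast, map_ofNat, mul_one]
    linear_combination hc - (algebraMap ℚ K b) ^ 2 * hα2
  obtain ⟨hs, ht⟩ := LinearIndependent.pair_iff.mp hli _ _ key
  have hab0 : a = 0 ∨ b = 0 := by
    rcases mul_eq_zero.mp ht with h | h
    · rcases mul_eq_zero.mp h with h' | h'
      · norm_num at h'
      · exact Or.inl h'
    · exact Or.inr h
  rcases hab0 with h0 | h0
  · -- a = 0 : -q b^2 - d = 0, impossible since q b^2 ≥ 0, d > 0
    rw [h0] at hs
    have hb2 : (0 : ℚ) ≤ (q : ℚ) * b ^ 2 := by positivity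
    have hd0 : (0 : ℚ) < (d : ℚ) := by exact_mod_cast lt_trans Nat.zero_lt_one hd1
    nlinarith
  · -- b = 0 : a^2 = d, so d is a rational square, contradiction with squarefree
    rw [h0] at hs
    have ha2 : a ^ 2 = (d : ℚ) := by nlinarith
    have haint : IsIntegral ℤ a := by
      refine ⟨X ^ 2 - C (d : ℤ), ?_, ?_⟩
      · have : ((X : ℤ[X]) ^ 2 - C (d : ℤ)).natDegree = 2 := natDegree_X_pow_sub_C
        exact monic_X_pow_sub_C _ two_ne_zero
      · simp [eval₂_sub, eval₂_pow, ha2]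
    obtain ⟨z, hz⟩ := IsIntegrallyClosed.isIntegral_iff.mp haint
    have hz' : (z : ℚ) = a := (eq_intCast (algebraMap ℤ ℚ) z).symm.trans hz
    have hz2 : z * z = (d : ℤ) := by
      have h5 : ((z * z : ℤ) : ℚ) = ((d : ℤ) : ℚ) := by
        push_cast [hz']
        linear_combination ha2
      exact_mod_cast h5
    have hzn : z.natAbs * z.natAbs = d := by
      have h6 := Int.natAbs_mul_self (a := z)
      rw [hz2] at h6
      exact_mod_cast h6
    have h7 : IsUnit z.natAbs := hd z.natAbs ⟨1, by omega⟩
    have h8 : z.natAbs = 1 := Nat.isUnit_iff.mp h7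
    rw [h8] at hzn
    omega

private lemma aux_square {F : Type*} [Field F] [Fintype F] {r : ℕ} (hr : r.Prime)
    (hr2 : r ≠ 2) [CharP F r] (hcard : Fintype.card F = r ^ 2) {d : ℕ} (hrd : ¬ r ∣ d) :
    ∃ u : F, (d : F) = u * u ∧ u ≠ 0 := by
  have hde : (d : F) ≠ 0 := by
    rw [Ne, CharP.cast_eq_zero_iff F r]
    exact hrd
  haveI := Fact.mk hr
  have flt : (d : F) ^ r = (d : F) := by
    have h1 : (d ^ r : ℕ) ≡ d [MOD r] := by
      have h0 := ZMod.pow_card (d : ZMod r)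
      rwa [← Nat.cast_pow, ZMod.natCast_eq_natCast_iff] at h0
    rw [← Nat.cast_pow]
    exact CharP.natCast_eq_natCast' F r h1
  have hstep : (d : F) ^ (r - 1) = 1 := by
    have h2 : (d : F) ^ (r - 1) * (d : F) = 1 * (d : F) := by
      rw [← pow_succ, one_mul]
      have h3 : r - 1 + 1 = r := Nat.succ_pred_eq_of_pos hr.pos
      rw [h3, flt]
    exact mul_right_cancel₀ hde h2
  have hodd : r % 2 = 1 := Nat.odd_iff.mp (hr.odd_of_ne_two hr2)
  have harith : r ^ 2 / 2 = (r - 1) * ((r + 1) / 2) := by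
    set k := (r + 1) / 2 with hkdef
    set m := r - 1 with hmdef
    have c1 : (2 * k : ℤ) = (r : ℤ) + 1 := by
      have : 2 * k = r + 1 := by omega
      exact_mod_cast this
    have c2 : (m : ℤ) = (r : ℤ) - 1 := by
      have hr1 : 1 ≤ r := hr.pos
      omega
    have e3' : (r : ℤ) ^ 2 = 2 * ((m : ℤ) * (k : ℤ)) + 1 := by nlinarith [c1, c2]
    have e3 : r ^ 2 = 2 * (m * k) + 1 := by exact_mod_cast e3'
    omega
  have heuler : (d : F) ^ (Fintype.card F / 2) = 1 := by
    rw [hcard, harith, pow_mul, hstep, one_pow]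
  have hchar2 : ringChar F ≠ 2 := by
    rw [ringChar.eq F r]
    exact hr2
  obtain ⟨u, hu⟩ := (FiniteField.isSquare_iff hchar2 hde).mpr heuler
  refine ⟨u, hu, ?_⟩
  rintro rfl
  rw [mul_zero] at hu
  exact hde hu
open NumberField Polynomial

set_option synthInstance.maxHeartbeats 1000000 in
set_option maxHeartbeats 3000000 in
/-- Let `q ≡ 7 (mod 8)` be prime, `K = ℚ(√−q)`, let `d > 1` be squarefree, and let
`r` be a prime not dividing `2dq` with `r·O_K` prime (i.e. `r` inert in `K`). Then
`r·O_K` splits in the quadratic extension `K(√d)/K`. -/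
theorem stmt3 (q : ℕ) (hq : q.Prime) (hq7 : q % 8 = 7)
    (K : Type*) [Field K] [NumberField K]
    (hdegK : Module.finrank ℚ K = 2)
    (hα : ∃ α : K, α ^ 2 = -(q : K))
    (d : ℕ) (hd : Squarefree d) (hd1 : 1 < d)
    (r : ℕ) (hr : r.Prime) (hrdvd : ¬ r ∣ 2 * d * q)
    (hinert : (Ideal.span {(r : 𝓞 K)}).IsPrime)
    (L : Type*) [Field L] [NumberField L] [Algebra K L]
    (hdegL : Module.finrank K L = 2)
    (hδ : ∃ δ : L, δ ^ 2 = (d : L)) :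
    ∃ P1 P2 : Ideal (𝓞 L), P1.IsPrime ∧ P2.IsPrime ∧ P1 ≠ P2 ∧
      Ideal.map (algebraMap (𝓞 K) (𝓞 L)) (Ideal.span {(r : 𝓞 K)}) = P1 * P2 := by
  classical
  obtain ⟨δ, hδ2⟩ := hδ
  obtain ⟨α, hα2⟩ := hα
  set I : Ideal (𝓞 K) := Ideal.span {(r : 𝓞 K)} with hIdef
  -- divisibility facts
  have hr2 : ¬ r ∣ 2 := fun h => hrdvd (h.trans ⟨d * q, by ring⟩)
  have hrd : ¬ r ∣ d := fun h => hrdvd (h.trans ⟨2 * q, by ring⟩)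
  have hrne2 : r ≠ 2 := fun h => hr2 (by rw [h])
  -- no square root of d in K
  have hKd : ∀ c : K, c ^ 2 ≠ (d : K) := aux_no_sqrt K hdegK hq.pos hα2 hd hd1
  -- δ is not in K
  have hδK : δ ∉ Set.range (algebraMap K L) := by
    rintro ⟨c, rfl⟩
    refine hKd c ((algebraMap K L).injective ?_)
    rw [map_pow, hδ2, map_natCast]
  -- δ is integral
  have hδint : IsIntegral ℤ δ := by
    refine ⟨X ^ 2 - C (d : ℤ), monic_X_pow_sub_C _ two_ne_zero, ?_⟩
    simp [hδ2]
  set x : 𝓞 L := ⟨δ, hδint⟩ with hxdef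
  have hxL : algebraMap (𝓞 L) L x = δ := rfl
  -- basic ideal facts
  have hrK0 : (r : 𝓞 K) ≠ 0 := Nat.cast_ne_zero.mpr hr.ne_zero
  have hIbot : I ≠ ⊥ := by
    rw [hIdef, Ne, Ideal.span_singleton_eq_bot]
    exact hrK0
  have hImax : I.IsMaximal := hinert.isMaximal hIbot
  haveI := hImax
  -- residue field
  letI : Field (𝓞 K ⧸ I) := Ideal.Quotient.field I
  have hnorm : Ideal.absNorm I = r ^ 2 := by
    have h1 : Algebra.norm ℤ (algebraMap ℤ (𝓞 K) (r : ℤ))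
        = (r : ℤ) ^ Fintype.card (Module.Free.ChooseBasisIndex ℤ (𝓞 K)) :=
      Algebra.norm_algebraMap_of_basis (Module.Free.chooseBasis ℤ (𝓞 K)) (r : ℤ)
    have h2 : Fintype.card (Module.Free.ChooseBasisIndex ℤ (𝓞 K)) = 2 := by
      rw [← Module.finrank_eq_card_chooseBasisIndex, NumberField.RingOfIntegers.rank, hdegK]
    rw [hIdef, show ((r : ℕ) : 𝓞 K) = algebraMap ℤ (𝓞 K) (r : ℤ) by simp,
      Ideal.absNorm_span_singleton, h1, h2]
    simp [Int.natAbs_pow]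
  haveI hFfin : Finite (𝓞 K ⧸ I) := (Ideal.absNorm_ne_zero_iff I).mp (by
    rw [hnorm]
    exact pow_ne_zero 2 hr.ne_zero)
  letI : Fintype (𝓞 K ⧸ I) := Fintype.ofFinite (𝓞 K ⧸ I)
  have hrF : (r : 𝓞 K ⧸ I) = 0 := by
    rw [← map_natCast (Ideal.Quotient.mk I) r, Ideal.Quotient.eq_zero_iff_mem]
    exact Ideal.mem_span_singleton_self _
  have hringchar : ringChar (𝓞 K ⧸ I) = r := by
    have hdvd : ringChar (𝓞 K ⧸ I) ∣ r := (ringChar.spec (𝓞 K ⧸ I) r).mp hrF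
    rcases (Nat.Prime.eq_one_or_self_of_dvd hr _ hdvd) with h | h
    · exfalso
      haveI : CharP (𝓞 K ⧸ I) 1 := h ▸ ringChar.charP (𝓞 K ⧸ I)
      have h1 : ((1 : ℕ) : 𝓞 K ⧸ I) = 0 := CharP.cast_eq_zero (𝓞 K ⧸ I) 1
      rw [Nat.cast_one] at h1
      exact one_ne_zero h1
    · exact h
  haveI hcharF : CharP (𝓞 K ⧸ I) r := hringchar ▸ ringChar.charP (𝓞 K ⧸ I)
  have hcardF : Fintype.card (𝓞 K ⧸ I) = r ^ 2 := by
    rw [← Nat.card_eq_fintype_card, ← Submodule.cardQuot_apply, ← Ideal.absNorm_apply, hnorm]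
  -- square root of d in F
  obtain ⟨u, hu, hu0⟩ := aux_square hr hrne2 hcardF hrd
  -- minpoly of δ over K
  have hδKint : IsIntegral K δ := .of_finite K δ
  have hmKδ : minpoly K δ = X ^ 2 - C (d : K) := by
    refine aux_monic_eq (monic_X_pow_sub_C _ two_ne_zero) (minpoly.monic hδKint) ?_ ?_
    · exact minpoly.dvd K δ (by simp [hδ2])
    · rw [natDegree_X_pow_sub_C]
      exact (minpoly.two_le_natDegree_iff hδKint).mpr (by simpa using hδK)
  -- x is integral over 𝓞 K
  have hxint : IsIntegral (𝓞 K) x := IsIntegralClosure.isIntegral (𝓞 K) L x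
  -- minpoly of x over 𝓞 K
  have hmAx : minpoly (𝓞 K) x = X ^ 2 - C (d : 𝓞 K) := by
    have hmap := minpoly.isIntegrallyClosed_eq_field_fractions K L hxint
    rw [hxL, hmKδ] at hmap
    apply Polynomial.map_injective (algebraMap (𝓞 K) K)
      (FaithfulSMul.algebraMap_injective (𝓞 K) K)
    rw [← hmap, Polynomial.map_sub, Polynomial.map_pow, map_X, map_C]
    simp
  -- adjoin K δ = ⊤
  have hadj : Algebra.adjoin K {algebraMap (𝓞 L) L x} = ⊤ := by
    rw [hxL]
    have hsp := aux_span hdegL hδK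
    rw [eq_top_iff]
    intro y _
    have hy : y ∈ Submodule.span K ({1, δ} : Set L) := hsp ▸ Submodule.mem_top
    have hle : Submodule.span K ({1, δ} : Set L)
        ≤ Subalgebra.toSubmodule (Algebra.adjoin K ({δ} : Set L)) := by
      rw [Submodule.span_le]
      intro z hz
      simp only [Set.mem_insert_iff, Set.mem_singleton_iff] at hz
      rcases hz with rfl | rfl
      · exact Subalgebra.one_mem _
      · exact Algebra.subset_adjoin rfl
    exact hle hy
  -- conductor condition
  have hcond : (conductor (𝓞 K) x).comap (algebraMap (𝓞 K) (𝓞 L)) ⊔ I = ⊤ := by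
    have hcmd := conductor_mul_differentIdeal (𝓞 K) K L x hadj
    have h2x : (2 : 𝓞 L) * x ∈ conductor (𝓞 K) x := by
      have hle : Ideal.span {aeval x (derivative (minpoly (𝓞 K) x))}
          ≤ conductor (𝓞 K) x := by
        rw [← hcmd]
        exact Ideal.mul_le_left
      have hd2 : aeval x (derivative (minpoly (𝓞 K) x)) = 2 * x := by
        rw [hmAx, derivative_sub, derivative_C, derivative_X_pow, sub_zero]
        simp [map_ofNat]
      exact hd2 ▸ hle (Ideal.mem_span_singleton_self _)
    have h4d : ((4 * d : ℕ) : 𝓞 L) ∈ conductor (𝓞 K) x := by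
      have hxx : x * x = ((d : ℕ) : 𝓞 L) := by
        apply NumberField.RingOfIntegers.ext
        show algebraMap (𝓞 L) L (x * x) = algebraMap (𝓞 L) L ((d : ℕ) : 𝓞 L)
        rw [map_mul, hxL, map_natCast, ← hδ2]
        ring
      have h44 : ((4 * d : ℕ) : 𝓞 L) = ((2 : 𝓞 L) * x) * ((2 : 𝓞 L) * x) := by
        have h45 : ((4 * d : ℕ) : 𝓞 L) = 4 * ((d : ℕ) : 𝓞 L) := by push_cast; ring
        rw [h45, ← hxx]
        ring
      rw [h44]
      exact Ideal.mul_mem_right _ _ h2x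
    have hmem : ((4 * d : ℕ) : 𝓞 K) ∈ (conductor (𝓞 K) x).comap (algebraMap (𝓞 K) (𝓞 L)) := by
      rw [Ideal.mem_comap, map_natCast]
      exact h4d
    by_contra hne
    have heq : I = (conductor (𝓞 K) x).comap (algebraMap (𝓞 K) (𝓞 L)) ⊔ I :=
      hImax.eq_of_le hne le_sup_right
    have h4I : ((4 * d : ℕ) : 𝓞 K) ∈ I := by
      rw [heq]
      exact Ideal.mem_sup_left hmem
    have h40 : ((4 * d : ℕ) : 𝓞 K ⧸ I) = 0 := by
      rw [← map_natCast (Ideal.Quotient.mk I), Ideal.Quotient.eq_zero_iff_mem]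
      exact h4I
    have hr4d : r ∣ 4 * d := (CharP.cast_eq_zero_iff _ r _).mp h40
    rcases (Nat.Prime.dvd_mul hr).mp hr4d with h | h
    · rcases (Nat.Prime.dvd_mul hr).mp (show r ∣ 2 * 2 by simpa using h) with h' | h' <;>
        exact hr2 h'
    · exact hrd h
  -- the factored polynomial
  have hpolyeq : (minpoly (𝓞 K) x).map (Ideal.Quotient.mk I)
      = (X - C u) * (X - C (-u)) := by
    rw [hmAx, Polynomial.map_sub, Polynomial.map_pow, map_X, map_C, map_natCast, hu,
      map_mul, map_neg]
    ring
  -- injectivity facts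
  have hInj : Function.Injective (algebraMap (𝓞 K) (𝓞 L)) :=
    FaithfulSMul.algebraMap_injective _ _
  have hmapbot : Ideal.map (algebraMap (𝓞 K) (𝓞 L)) I ≠ ⊥ := by
    rw [Ne, Ideal.map_eq_bot_iff_of_injective hInj]
    exact hIbot
  have h2F : (2 : 𝓞 K ⧸ I) ≠ 0 := by
    rw [show (2 : 𝓞 K ⧸ I) = ((2 : ℕ) : 𝓞 K ⧸ I) by norm_cast, Ne,
      CharP.cast_eq_zero_iff _ r]
    exact hr2
  have huneg : u ≠ -u := by
    intro h
    apply hu0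
    have h2u : (2 : 𝓞 K ⧸ I) * u = 0 := by
      have := add_eq_zero_iff_eq_neg.mpr h
      rw [two_mul]
      exact this
    rcases mul_eq_zero.mp h2u with h' | h'
    · exact absurd h' h2F
    · exact h'
  have hp12 : (X - C u) ≠ (X - C (-u)) := by
    intro h
    exact huneg (Polynomial.C_injective (sub_right_inj.mp h))
  -- normalized factors of the minimal polynomial mod I
  have hfac : UniqueFactorizationMonoid.normalizedFactors
      ((minpoly (𝓞 K) x).map (Ideal.Quotient.mk I)) = {X - C u, X - C (-u)} := by
    rw [hpolyeq,
      UniqueFactorizationMonoid.normalizedFactors_mul (X_sub_C_ne_zero u)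
        (X_sub_C_ne_zero (-u)),
      UniqueFactorizationMonoid.normalizedFactors_irreducible (irreducible_X_sub_C u),
      UniqueFactorizationMonoid.normalizedFactors_irreducible (irreducible_X_sub_C (-u)),
      (monic_X_sub_C u).normalize_eq_self, (monic_X_sub_C (-u)).normalize_eq_self,
      Multiset.singleton_add]
    rfl
  have hp1mem : (X - C u) ∈ UniqueFactorizationMonoid.normalizedFactors
      ((minpoly (𝓞 K) x).map (Ideal.Quotient.mk I)) := by
    rw [hfac]; simp
  have hp2mem : (X - C (-u)) ∈ UniqueFactorizationMonoid.normalizedFactors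
      ((minpoly (𝓞 K) x).map (Ideal.Quotient.mk I)) := by
    rw [hfac]; simp
  have e := KummerDedekind.normalizedFactorsMapEquivNormalizedFactorsMinPolyMk
    hImax hIbot hcond hxint
  obtain ⟨Q1, hQ1mem, hQ1eq⟩ : ∃ Q1 : Ideal (𝓞 L),
      Q1 ∈ UniqueFactorizationMonoid.normalizedFactors
        (Ideal.map (algebraMap (𝓞 K) (𝓞 L)) I) ∧
      Q1 = ↑(e.symm ⟨X - C u, hp1mem⟩) :=
    ⟨_, (e.symm ⟨X - C u, hp1mem⟩).prop, rfl⟩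
  obtain ⟨Q2, hQ2mem, hQ2eq⟩ : ∃ Q2 : Ideal (𝓞 L),
      Q2 ∈ UniqueFactorizationMonoid.normalizedFactors
        (Ideal.map (algebraMap (𝓞 K) (𝓞 L)) I) ∧
      Q2 = ↑(e.symm ⟨X - C (-u), hp2mem⟩) :=
    ⟨_, (e.symm ⟨X - C (-u), hp2mem⟩).prop, rfl⟩
  have hQne : Q1 ≠ Q2 := by
    intro h
    rw [hQ1eq, hQ2eq] at h
    have h1 := e.symm.injective (Subtype.ext h)
    rw [Subtype.mk.injEq] at h1
    exact hp12 h1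
  have hcardN : Multiset.card (UniqueFactorizationMonoid.normalizedFactors
      (Ideal.map (algebraMap (𝓞 K) (𝓞 L)) I)) = 2 := by
    rw [KummerDedekind.normalizedFactors_ideal_map_eq_normalizedFactors_min_poly_mk_map
        hImax hIbot hcond hxint,
      Multiset.card_map]
    simp [hfac]
  have hle : ({Q1, Q2} : Multiset (Ideal (𝓞 L))) ≤ UniqueFactorizationMonoid.normalizedFactors
      (Ideal.map (algebraMap (𝓞 K) (𝓞 L)) I) := by
    rw [Multiset.le_iff_count]
    intro a
    rcases eq_or_ne a Q1 with rfl | h1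
    · have hc : Multiset.count a ({a, Q2} : Multiset (Ideal (𝓞 L))) = 1 := by
        simp [Multiset.count_cons, Multiset.count_singleton, hQne]
      rw [hc]
      exact Multiset.one_le_count_iff_mem.mpr hQ1mem
    · rcases eq_or_ne a Q2 with rfl | h2
      · have hc : Multiset.count a ({Q1, a} : Multiset (Ideal (𝓞 L))) = 1 := by
          simp [Multiset.count_cons, Multiset.count_singleton, h1]
        rw [hc]
        exact Multiset.one_le_count_iff_mem.mpr hQ2mem
      · have hc : Multiset.count a ({Q1, Q2} : Multiset (Ideal (𝓞 L))) = 0 := by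
          simp [Multiset.count_cons, Multiset.count_singleton, h1, h2]
        rw [hc]
        exact Nat.zero_le _
  have hNeq : ({Q1, Q2} : Multiset (Ideal (𝓞 L))) = UniqueFactorizationMonoid.normalizedFactors
      (Ideal.map (algebraMap (𝓞 K) (𝓞 L)) I) :=
    Multiset.eq_of_le_of_card_le hle (by simp [hcardN])
  have hprod : Ideal.map (algebraMap (𝓞 K) (𝓞 L)) I = Q1 * Q2 := by
    have hass := UniqueFactorizationMonoid.prod_normalizedFactors hmapbot
    rw [← hNeq] at hass
    have heq2 := associated_iff_eq.mp hass
    rw [← heq2, Multiset.insert_eq_cons, Multiset.prod_cons, Multiset.prod_singleton]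
  exact ⟨Q1, Q2,
    Ideal.isPrime_of_prime (UniqueFactorizationMonoid.prime_of_normalized_factor _ hQ1mem),
    Ideal.isPrime_of_prime (UniqueFactorizationMonoid.prime_of_normalized_factor _ hQ2mem),
    hQne, hprod⟩
end

section
/- Let q be a prime with q ≡ 7 (mod 8) and K = ℚ(√−q). Let r_1, …, r_k be distinct primes, each ≡ 1 (mod 4) and inert in K (i.e. r_i·O_K is a prime ideal of the ring of integers O_K for each i). Then the field J = K(√r_1, …, √r_k) obtained by adjoining to K the (positive real) square roots of r_1, …, r_k satisfies [J : K] = 2^k. -/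
set_option synthInstance.maxHeartbeats 1000000
set_option maxHeartbeats 1000000

open NumberField IntermediateField

private lemma csqrt_sq (n : ℕ) : ((Real.sqrt n : ℝ) : ℂ) ^ 2 = (n : ℂ) := by
  rw [← Complex.ofReal_pow, Real.sq_sqrt (Nat.cast_nonneg n), Complex.ofReal_natCast]

private lemma quad_integral {L : Type*} [Field L] [Algebra L ℂ] {x : ℂ} {c : L}
    (hx : x ^ 2 = algebraMap L ℂ c) : IsIntegral L x :=
  ⟨Polynomial.X ^ 2 - Polynomial.C c, Polynomial.monic_X_pow_sub_C c two_ne_zero, by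
    simp [Polynomial.eval₂_sub, hx]⟩

private lemma mem_adjoin_quad {L : Type*} [Field L] [Algebra L ℂ] {x : ℂ} {c : L}
    (hx : x ^ 2 = algebraMap L ℂ c) {z : ℂ}
    (hz : z ∈ IntermediateField.adjoin L {x}) :
    ∃ a b : L, z = algebraMap L ℂ a + algebraMap L ℂ b * x := by
  have hint : IsIntegral L x := quad_integral hx
  let T : Subalgebra L ℂ :=
    { carrier := {z | ∃ a b : L, z = algebraMap L ℂ a + algebraMap L ℂ b * x}
      mul_mem' := by
        rintro p q ⟨a, b, rfl⟩ ⟨a', b', rfl⟩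
        exact ⟨a * a' + b * b' * c, a * b' + b * a', by
          simp only [map_add, map_mul]
          linear_combination (algebraMap L ℂ b * algebraMap L ℂ b') * hx⟩
      add_mem' := by
        rintro p q ⟨a, b, rfl⟩ ⟨a', b', rfl⟩
        exact ⟨a + a', b + b', by simp only [map_add]; ring⟩
      algebraMap_mem' := fun r => ⟨r, 0, by simp⟩ }
  have h2 : z ∈ Algebra.adjoin L {x} := by
    rw [← IntermediateField.adjoin_simple_toSubalgebra_of_isAlgebraic hint.isAlgebraic]
    exact hz
  have h3 : Algebra.adjoin L {x} ≤ T :=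
    Algebra.adjoin_le (by
      intro y hy
      rw [Set.mem_singleton_iff] at hy
      subst hy
      exact ⟨0, 1, by simp⟩)
  exact h3 h2

private lemma finrank_adjoin_quad {L : Type*} [Field L] [Algebra L ℂ] {x : ℂ} {c : L}
    (hx : x ^ 2 = algebraMap L ℂ c) (hxL : x ∉ (⊥ : IntermediateField L ℂ)) :
    Module.finrank L (IntermediateField.adjoin L {x}) = 2 := by
  have hint : IsIntegral L x := quad_integral hx
  rw [IntermediateField.adjoin.finrank hint]
  have hdvd : minpoly L x ∣ Polynomial.X ^ 2 - Polynomial.C c :=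
    minpoly.dvd _ _ (by simp [hx])
  have hne : (Polynomial.X ^ 2 - Polynomial.C c : Polynomial L) ≠ 0 :=
    (Polynomial.monic_X_pow_sub_C c two_ne_zero).ne_zero
  have hle : (minpoly L x).natDegree ≤ 2 := by
    have := Polynomial.natDegree_le_of_dvd hdvd hne
    rwa [Polynomial.natDegree_X_pow_sub_C] at this
  have hpos : 0 < (minpoly L x).natDegree := minpoly.natDegree_pos hint
  have hne1 : (minpoly L x).natDegree ≠ 1 := by
    intro h
    have h1 : Module.finrank L (IntermediateField.adjoin L {x}) = 1 := by
      rw [IntermediateField.adjoin.finrank hint, h]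
    exact hxL (IntermediateField.adjoin_simple_eq_bot_iff.mp
      (IntermediateField.finrank_eq_one_iff.mp h1))
  omega

private lemma finrank_restrictScalars' (F : Type*) [Field F] [Algebra F ℂ]
    (L : IntermediateField F ℂ) (M : IntermediateField L ℂ) :
    Module.finrank F (M.restrictScalars F) = Module.finrank F M := rfl

private lemma key (F : Type*) [Field F] [Algebra F ℂ]
    (hF : ∀ d : ℕ, Squarefree d → 1 < d →
      ((Real.sqrt d : ℝ) : ℂ) ∉ (⊥ : IntermediateField F ℂ))
    (s : Finset ℕ) :
    (∀ p ∈ s, Nat.Prime p) →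
    Module.finrank F (IntermediateField.adjoin F
        ((fun p : ℕ => ((Real.sqrt p : ℝ) : ℂ)) '' ↑s)) = 2 ^ s.card ∧
    ∀ d : ℕ, Squarefree d → 1 < d → (∀ p ∈ s, ¬ p ∣ d) →
      ((Real.sqrt d : ℝ) : ℂ) ∉ IntermediateField.adjoin F
        ((fun p : ℕ => ((Real.sqrt p : ℝ) : ℂ)) '' ↑s) := by
  classical
  induction s using Finset.induction_on with
  | empty =>
      intro _
      constructor
      · simp [IntermediateField.adjoin_empty]
      · intro d hd hd1 _
        simpa [IntermediateField.adjoin_empty] using hF d hd hd1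
  | @insert p t hpt ih =>
      intro hs
      have hps : p.Prime := hs p (Finset.mem_insert_self p t)
      have hts : ∀ q ∈ t, Nat.Prime q := fun q hq => hs q (Finset.mem_insert_of_mem hq)
      obtain ⟨ihA, ihB⟩ := ih hts
      set sq : ℕ → ℂ := fun n : ℕ => ((Real.sqrt n : ℝ) : ℂ) with hsq
      set L : IntermediateField F ℂ := IntermediateField.adjoin F (sq '' ↑t) with hL
      set x : ℂ := sq p with hxdef
      have hxnotL : x ∉ L := by
        refine ihB p hps.squarefree hps.one_lt ?_
        intro q hq hdvd
        rw [Nat.prime_dvd_prime_iff_eq (hts q hq) hps] at hdvd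
        exact hpt (hdvd ▸ hq)
      have hxbot : x ∉ (⊥ : IntermediateField L ℂ) := by
        rw [IntermediateField.mem_bot]
        rintro ⟨y, hyx⟩
        apply hxnotL
        rw [← hyx]
        exact y.2
      have hc : x ^ 2 = algebraMap L ℂ ((p : ℕ) : L) := by
        rw [map_natCast]
        exact csqrt_sq p
      have hset : sq '' ↑(insert p t) = (sq '' ↑t) ∪ {x} := by
        rw [Finset.coe_insert, Set.image_insert_eq, Set.union_singleton]
      have htower : (IntermediateField.adjoin L {x}).restrictScalars F
          = IntermediateField.adjoin F (sq '' ↑(insert p t)) := by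
        rw [hset]
        exact IntermediateField.adjoin_adjoin_left F _ _
      have hdeg2 : Module.finrank L (IntermediateField.adjoin L {x}) = 2 :=
        finrank_adjoin_quad hc hxbot
      constructor
      · rw [← htower, finrank_restrictScalars',
          ← Module.finrank_mul_finrank F L (IntermediateField.adjoin L {x}), ihA, hdeg2,
          Finset.card_insert_of_notMem hpt, pow_succ]
      · intro d hd hd1 hdvd hmem
        rw [← htower, IntermediateField.mem_restrictScalars] at hmem
        obtain ⟨a, b, hab⟩ := mem_adjoin_quad hc hmem
        have hpd : ¬ p ∣ d := hdvd p (Finset.mem_insert_self p t)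
        have hdt : ∀ q ∈ t, ¬ q ∣ d := fun q hq => hdvd q (Finset.mem_insert_of_mem hq)
        by_cases hb : b = 0
        · subst hb
          simp only [map_zero, zero_mul, add_zero] at hab
          exact ihB d hd hd1 hdt (by rw [hab]; exact a.2)
        by_cases ha : a = 0
        · subst ha
          simp only [map_zero, zero_add] at hab
          have hsqf : Squarefree (d * p) :=
            (Nat.squarefree_mul ((hps.coprime_iff_not_dvd.mpr hpd).symm)).mpr
              ⟨hd, hps.squarefree⟩
          have hlt : 1 < d * p := lt_of_lt_of_le hd1 (Nat.le_mul_of_pos_right d hps.pos)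
          have hdvd' : ∀ q ∈ t, ¬ q ∣ d * p := by
            intro q hq hqdp
            rcases (Nat.Prime.dvd_mul (hts q hq)).mp hqdp with h | h
            · exact hdt q hq h
            · rw [Nat.prime_dvd_prime_iff_eq (hts q hq) hps] at h
              exact hpt (h ▸ hq)
          refine ihB (d * p) hsqf hlt hdvd' ?_
          have hmul : ((Real.sqrt ((d * p : ℕ)) : ℝ) : ℂ) = ((Real.sqrt d : ℝ) : ℂ) * x := by
            have h1 : Real.sqrt ((d * p : ℕ) : ℝ) = Real.sqrt d * Real.sqrt p := by
              push_cast
              exact Real.sqrt_mul (Nat.cast_nonneg d) p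
            rw [h1]
            push_cast
            rfl
          have : ((Real.sqrt ((d * p : ℕ)) : ℝ) : ℂ) = algebraMap L ℂ (b * (p : L)) := by
            rw [hmul, hab, map_mul, map_natCast, mul_assoc, ← csqrt_sq p]
            ring
          rw [this]
          exact (b * (p : L)).2
        · apply hxnotL
          have hd2 : ((Real.sqrt d : ℝ) : ℂ) ^ 2 = (d : ℂ) := csqrt_sq d
          rw [hab] at hd2
          have hxp : x ^ 2 = (p : ℂ) := csqrt_sq p
          have hane : (algebraMap L ℂ a) ≠ 0 := by
            simpa using ha
          have hbne : (algebraMap L ℂ b) ≠ 0 := by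
            simpa using hb
          have hx_eq : x = ((d : ℂ) - (algebraMap L ℂ a) ^ 2
              - (algebraMap L ℂ b) ^ 2 * (p : ℂ)) / (2 * algebraMap L ℂ a * algebraMap L ℂ b) := by
            rw [eq_div_iff (mul_ne_zero (mul_ne_zero two_ne_zero hane) hbne)]
            linear_combination hd2 - (algebraMap L ℂ b) ^ 2 * hxp
          rw [hx_eq]
          have hmemA : (algebraMap L ℂ a : ℂ) ∈ L := a.2
          have hmemB : (algebraMap L ℂ b : ℂ) ∈ L := b.2
          have h2L : (2 : ℂ) ∈ L := by
            have := IntermediateField.natCast_mem L 2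
            simpa using this
          exact div_mem (sub_mem (sub_mem (IntermediateField.natCast_mem L d)
              (pow_mem hmemA 2)) (mul_mem (pow_mem hmemB 2) (IntermediateField.natCast_mem L p)))
            (mul_mem (mul_mem h2L hmemA) hmemB)

/-- Let `q ≡ 7 (mod 8)` be prime, `K = ℚ(√−q) ⊆ ℂ`, and let `r₁, …, r_k` be
distinct primes, each `≡ 1 (mod 4)` and inert in `K`. Then
`[K(√r₁, …, √r_k) : K] = 2^k`. -/
theorem stmt4 (q : ℕ) (hq : q.Prime) (hq7 : q % 8 = 7)
    (K : IntermediateField ℚ ℂ) [NumberField K]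
    (hdegK : Module.finrank ℚ K = 2)
    (hα : ∃ α : K, (α : ℂ) ^ 2 = -(q : ℂ))
    (k : ℕ) (r : Fin k → ℕ) (hr : ∀ i, (r i).Prime)
    (hr1 : ∀ i, r i % 4 = 1) (hinj : Function.Injective r)
    (hinert : ∀ i, (Ideal.span {(r i : 𝓞 K)}).IsPrime) :
    Module.finrank K
      (IntermediateField.adjoin K (Set.range fun i => ((Real.sqrt (r i) : ℝ) : ℂ)))
      = 2 ^ k := by
  classical
  obtain ⟨α, hα2⟩ := hα
  have haim : (α : ℂ).im ≠ 0 := by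
    intro h
    have hre : (((α : ℂ).re : ℝ) : ℂ) = (α : ℂ) := Complex.ext rfl (by simp [h])
    rw [← hre] at hα2
    have : ((α : ℂ).re : ℝ) ^ 2 = -(q : ℝ) := by
      have := hα2
      push_cast at this
      exact_mod_cast congrArg Complex.re this
    nlinarith [sq_nonneg ((α : ℂ).re), hq.pos, this, (by exact_mod_cast hq.pos : (0:ℝ) < (q:ℝ))]
  have hF : ∀ d : ℕ, Squarefree d → 1 < d →
      ((Real.sqrt d : ℝ) : ℂ) ∉ (⊥ : IntermediateField K ℂ) := by
    intro d hd hd1 hmem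
    rw [IntermediateField.mem_bot] at hmem
    obtain ⟨y, hy⟩ := hmem
    have hirr : Irrational (Real.sqrt d) := by
      rw [irrational_sqrt_natCast_iff]
      rintro ⟨m, hm⟩
      have hu : IsUnit m := hd m (by rw [hm])
      rw [Nat.isUnit_iff] at hu
      rw [hu] at hm
      norm_num at hm
      omega
    have hli : LinearIndependent ℚ ![(1 : K), y, α] := by
      rw [Fintype.linearIndependent_iff]
      intro g hg
      simp only [Fin.sum_univ_three, Matrix.cons_val_zero, Matrix.cons_val_one,
        Matrix.head_cons, Matrix.cons_val_two, Matrix.tail_cons] at hg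
      have hgc : (g 0 : ℂ) + (g 1 : ℂ) * ((Real.sqrt d : ℝ) : ℂ) + (g 2 : ℂ) * (α : ℂ) = 0 := by
        have h0 : ((g 0 • (1 : K) + g 1 • y + g 2 • α : K) : ℂ) = 0 := by rw [hg]; simp
        push_cast at h0
        have hy' : (y : ℂ) = ((Real.sqrt d : ℝ) : ℂ) := hy
        rw [hy'] at h0
        simp only [Rat.smul_def] at h0
        linear_combination h0
      have hg2 : g 2 = 0 := by
        have him := congrArg Complex.im hgc
        simp [Complex.add_im, Complex.mul_im] at him
        rcases him with h | h
        · exact_mod_cast h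
        · exact absurd h haim
      rw [hg2] at hgc
      have hre := congrArg Complex.re hgc
      simp [Complex.add_re, Complex.mul_re] at hre
      have hg1 : g 1 = 0 := by
        by_contra hg1
        apply hirr
        refine ⟨-(g 0) / (g 1), ?_⟩
        have hg1' : ((g 1 : ℝ)) ≠ 0 := by exact_mod_cast hg1
        push_cast
        field_simp
        linarith [hre]
      rw [hg1] at hre
      simp at hre
      intro i
      fin_cases i
      · exact_mod_cast hre
      · exact hg1
      · exact hg2
    have hcard := hli.fintype_card_le_finrank
    rw [hdegK] at hcard
    simp at hcard
  have hset : (Set.range fun i => ((Real.sqrt (r i) : ℝ) : ℂ))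
      = (fun p : ℕ => ((Real.sqrt p : ℝ) : ℂ)) '' ↑(Finset.univ.image r) := by
    rw [Finset.coe_image, Finset.coe_univ, Set.image_univ, ← Set.range_comp]
    rfl
  rw [hset, (key K hF (Finset.univ.image r) (by
      intro p hp
      simp only [Finset.mem_image, Finset.mem_univ, true_and] at hp
      obtain ⟨i, rfl⟩ := hp
      exact hr i)).1,
    Finset.card_image_of_injective _ hinj, Finset.card_univ, Fintype.card_fin]
end

section
/- Let q be a prime with q ≡ 7 (mod 8), K = ℚ(√−q) with ring of integers O_K, and let r_1, …, r_k be distinct primes each ≡ 1 (mod 4). Let J = K(√r_1, …, √r_k) with ring of integers O_J. Then the extension J/K is unramified at the primes above 2: for every prime ideal P of O_J lying above 2, the ramification index of P over the prime P ∩ O_K of O_K is equal to 1. -/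
open NumberField

set_option maxHeartbeats 4000000
set_option synthInstance.maxHeartbeats 400000

open NumberField Polynomial Ideal

lemma quadStep {F E : Type*} [Field F] [Field E] [Algebra F E] [NumberField F] [NumberField E]
    (t : 𝓞 E) (c : 𝓞 F) (hc : t ^ 2 + t = algebraMap (𝓞 F) (𝓞 E) c)
    (hgen : Algebra.adjoin F {(algebraMap (𝓞 E) E t)} = ⊤)
    (Q : Ideal (𝓞 E)) (hQ : Q.IsPrime) (h2 : (2 : 𝓞 E) ∈ Q) (hodd : 2 * t + 1 ∉ Q) :
    Ideal.ramificationIdx' (Ideal.comap (algebraMap (𝓞 F) (𝓞 E)) Q) Q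
      = 1 := by
  classical
  set f := algebraMap (𝓞 F) (𝓞 E)
  set p := Ideal.comap f Q with hp
  have hQne : Q ≠ ⊤ := hQ.ne_top
  have hpprime : p.IsPrime := hQ.comap f
  have hpbot : p ≠ ⊥ := by
    intro h
    have h2p : (2 : 𝓞 F) ∈ p := by
      rw [hp, Ideal.mem_comap]
      have : f 2 = 2 := map_ofNat f 2
      rw [this]; exact h2
    rw [h] at h2p
    simp only [Ideal.mem_bot] at h2p
    exact two_ne_zero h2p
  haveI hpmax : p.IsMaximal := Ideal.IsPrime.isMaximal hpprime hpbot
  have hle : Ideal.map f p ≤ Q ^ 1 := by simpa using Ideal.map_comap_le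
  have hgt : ¬ Ideal.map f p ≤ Q ^ 2 := by
    intro hle2
    have hdvd : Q ^ 2 ∣ Ideal.map f p := Ideal.dvd_iff_le.mpr hle2
    have hQd : Q ^ (2 - 1) ∣ differentIdeal (𝓞 F) (𝓞 E) :=
      pow_sub_one_dvd_differentIdeal (𝓞 F) Q 2 hpbot hdvd
    have hdQ : differentIdeal (𝓞 F) (𝓞 E) ≤ Q := Ideal.le_of_dvd (by simpa using hQd)
    have hmem : aeval t (derivative (minpoly (𝓞 F) t)) ∈ differentIdeal (𝓞 F) (𝓞 E) :=
      aeval_derivative_mem_differentIdeal (𝓞 F) F E t hgen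
    -- minpoly divides X^2 + X - C c
    have hint : IsIntegral (𝓞 F) t := IsIntegralClosure.isIntegral_algebra (𝓞 F) E |>.isIntegral t
    set g : (𝓞 F)[X] := X ^ 2 + X - C c with hg
    have hgmonic : g.Monic := by
      have h12 : g = X ^ (1 + 1) + (X - C c) := by rw [hg]; ring
      rw [h12]
      exact Polynomial.monic_X_pow_add (by rw [Polynomial.degree_X_sub_C]; norm_num)
    have hgt0 : aeval t g = 0 := by
      rw [hg]
      simp only [map_sub, map_add, map_pow, aeval_X, aeval_C]
      rw [← hc]
      ring
    have hdd : minpoly (𝓞 F) t ∣ g := minpoly.isIntegrallyClosed_dvd hint hgt0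
    obtain ⟨h, hh⟩ := hdd
    have hderiv : aeval t (derivative g)
        = aeval t (derivative (minpoly (𝓞 F) t)) * aeval t h := by
      rw [hh, derivative_mul]
      simp only [map_add, _root_.map_mul, minpoly.aeval]
      ring
    have hg' : aeval t (derivative g) = 2 * t + 1 := by
      rw [hg]
      simp only [derivative_sub, derivative_add, derivative_X_pow, derivative_X, derivative_C,
        map_sub, map_add, _root_.map_mul, map_pow, aeval_X, aeval_C, map_ofNat,
        map_zero, map_one]
      simp only [map_natCast]
      norm_num
    apply hodd
    rw [← hg', hderiv]
    exact Ideal.mul_mem_right _ _ (hdQ hmem)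
  exact Ideal.ramificationIdx_spec hle (by simpa using hgt)

open IntermediateField in
lemma claimB (K : IntermediateField ℚ ℂ) [NumberField K] :
    ∀ (k : ℕ) (r : Fin k → ℕ), (∀ i, r i % 4 = 1) →
      ∀ (L : IntermediateField K ℂ), ∀ _ : NumberField L,
      L = IntermediateField.adjoin K (Set.range fun i => ((Real.sqrt (r i) : ℝ) : ℂ)) →
      ∀ (P : Ideal (𝓞 L)), P.IsPrime → (2 : 𝓞 L) ∈ P →
      Ideal.ramificationIdx'
        (Ideal.comap (algebraMap (𝓞 K) (𝓞 L)) P) P = 1 := by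
  intro k
  induction k with
  | zero =>
    intro r hr1 L hNF hL P hP h2
    have hrange : (Set.range fun i : Fin 0 => ((Real.sqrt (r i) : ℝ) : ℂ)) = ∅ :=
      Set.range_eq_empty _
    rw [hrange, IntermediateField.adjoin_empty] at hL
    subst hL
    refine quadStep (F := K) 0 0 (by simp) ?_ P hP h2 ?_
    · have h1 : Module.finrank K (⊥ : IntermediateField K ℂ) = 1 :=
        IntermediateField.finrank_bot
      have hbt := Subalgebra.bot_eq_top_of_finrank_eq_one h1
      rw [map_zero]
      refine eq_top_iff.mpr ?_
      rw [← hbt]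
      exact bot_le
    · intro hmem
      have h2t : 2 * (0 : 𝓞 (⊥ : IntermediateField K ℂ)) ∈ P := Ideal.mul_mem_right _ _ h2
      have h1 : (1 : 𝓞 (⊥ : IntermediateField K ℂ)) ∈ P := by
        have := P.sub_mem hmem h2t
        simpa using this
      exact hP.ne_top ((Ideal.eq_top_iff_one _).mpr h1)
  | succ k ih =>
    intro r hr1 L hNF hL P hP h2
    set x : Fin (k + 1) → ℂ := fun i => ((Real.sqrt (r i) : ℝ) : ℂ) with hx
    set z : ℂ := x (Fin.last k) with hz
    have hrange : Set.range x = (Set.range fun i : Fin k => x i.castSucc) ∪ {z} := by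
      ext w
      constructor
      · rintro ⟨i, rfl⟩
        rcases eq_or_ne i (Fin.last k) with rfl | hne
        · exact Or.inr rfl
        · obtain ⟨j, rfl⟩ := Fin.exists_castSucc_eq.mpr hne
          exact Or.inl ⟨j, rfl⟩
      · rintro (⟨j, rfl⟩ | rfl)
        · exact ⟨j.castSucc, rfl⟩
        · exact ⟨Fin.last k, rfl⟩
    rw [hrange, ← IntermediateField.adjoin_adjoin_left] at hL
    set J' : IntermediateField K ℂ :=
      IntermediateField.adjoin K (Set.range fun i : Fin k => x i.castSucc) with hJ'
    -- finite dimensionality of J'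
    have hxint : ∀ w ∈ (Set.range fun i : Fin k => x i.castSucc), IsIntegral K w := by
      rintro w ⟨i, rfl⟩
      refine ⟨Polynomial.X ^ 2 - Polynomial.C ((r i.castSucc : ℕ) : K), ?_, ?_⟩
      · apply Polynomial.monic_X_pow_sub_C _ (by norm_num)
      · simp only [Polynomial.eval₂_sub, Polynomial.eval₂_pow, Polynomial.eval₂_X,
          Polynomial.eval₂_C, hx]
        have : (((Real.sqrt (r i.castSucc) : ℝ) : ℂ)) ^ 2 = ((r i.castSucc : ℕ) : ℂ) := by
          push_cast
          norm_cast
          exact Real.sq_sqrt (Nat.cast_nonneg _)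
        rw [this]
        have : (algebraMap K ℂ) ((r i.castSucc : ℕ) : K) = ((r i.castSucc : ℕ) : ℂ) :=
          map_natCast _ _
        rw [this, sub_self]
    haveI : Finite (Set.range fun i : Fin k => x i.castSucc) := Set.finite_range _
    haveI hfdKJ' : FiniteDimensional K J' := IntermediateField.finiteDimensional_adjoin hxint
    -- J' ≤ L
    have hJ'L : J' ≤ L := by
      rw [hL]
      intro w hw
      exact IntermediateField.algebraMap_mem (IntermediateField.adjoin J' ({z} : Set ℂ)) ⟨w, hw⟩
    -- Number field instance on J'
    haveI : FiniteDimensional ℚ J' := by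
      have hinj : Function.Injective (IntermediateField.inclusion hJ'L) :=
        (IntermediateField.inclusion hJ'L).injective
      exact FiniteDimensional.of_injective
        ((IntermediateField.inclusion hJ'L).toRingHom.toRatAlgHom.toLinearMap) hinj
    haveI : NumberField J' := ⟨⟩
    -- algebra structure J' → L
    letI algJL : Algebra J' L := ((IntermediateField.inclusion hJ'L).toRingHom).toAlgebra
    haveI towKJL : IsScalarTower K (↥J') (↥L) :=
      IsScalarTower.of_algebraMap_eq (R := K) (S := ↥J') (A := ↥L) (fun w => rfl)
    haveI towJLC : IsScalarTower (↥J') (↥L) ℂ :=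
      IsScalarTower.of_algebraMap_eq (R := ↥J') (S := ↥L) (A := ℂ) (fun w => rfl)
    -- the new generator
    set θ : ℂ := (z - 1) / 2 with hθ
    set n : ℕ := r (Fin.last k) / 4 with hn
    have hrn : (r (Fin.last k) : ℂ) = 4 * n + 1 := by
      have h := Nat.div_add_mod (r (Fin.last k)) 4
      rw [hr1 (Fin.last k)] at h
      rw [hn]
      exact_mod_cast h.symm
    have hz2 : z ^ 2 = ((r (Fin.last k) : ℕ) : ℂ) := by
      rw [hz, hx]
      push_cast
      norm_cast
      exact Real.sq_sqrt (Nat.cast_nonneg _)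
    have h2θ : 2 * θ + 1 = z := by
      rw [hθ]
      field_simp
      ring
    have hθeq : θ ^ 2 + θ = (n : ℂ) := by
      have h4 : (4 : ℂ) ≠ 0 := by norm_num
      apply mul_left_cancel₀ h4
      have expand : (4 : ℂ) * (θ ^ 2 + θ) = (2 * θ + 1) ^ 2 - 1 := by ring
      rw [expand, h2θ, hz2, hrn]
      ring
    have hzL : z ∈ L := by
      rw [hL]
      show z ∈ IntermediateField.adjoin J' ({z} : Set ℂ)
      exact IntermediateField.subset_adjoin _ _ rfl
    have hθL : θ ∈ L := by
      have h2L : (2 : ℂ) ∈ L := by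
        have := L.add_mem L.one_mem L.one_mem
        norm_num at this ⊢
      exact L.div_mem (L.sub_mem hzL L.one_mem) h2L
    set t₀ : L := ⟨θ, hθL⟩ with ht₀
    have htint : IsIntegral ℤ t₀ := by
      refine ⟨Polynomial.X ^ 2 + Polynomial.X - Polynomial.C (n : ℤ), ?_, ?_⟩
      · have h12 : (Polynomial.X ^ 2 + Polynomial.X - Polynomial.C (n : ℤ) : Polynomial ℤ)
            = Polynomial.X ^ (1 + 1) + (Polynomial.X - Polynomial.C (n : ℤ)) := by ring
        rw [h12]
        exact Polynomial.monic_X_pow_add (by rw [Polynomial.degree_X_sub_C]; norm_num)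
      · have hinj : Function.Injective (algebraMap (↥L) ℂ) := (algebraMap (↥L) ℂ).injective
        apply hinj
        rw [map_zero]
        simp only [Polynomial.eval₂_sub, Polynomial.eval₂_add, Polynomial.eval₂_pow,
          Polynomial.eval₂_X, Polynomial.eval₂_C, map_sub, map_add, map_pow, map_intCast]
        have hcoeθ : algebraMap (↥L) ℂ t₀ = θ := rfl
        rw [hcoeθ]
        push_cast
        rw [hθeq, sub_self]
    set t : 𝓞 L := ⟨t₀, htint⟩ with ht
    -- hc
    have hc : t ^ 2 + t = algebraMap (𝓞 J') (𝓞 L) ((n : ℕ) : 𝓞 J') := by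
      apply NumberField.RingOfIntegers.coe_injective
      rw [map_add, map_pow, map_natCast, map_natCast]
      have e0 : algebraMap (𝓞 ↥L) (↥L) t = t₀ := rfl
      rw [e0]
      refine Subtype.ext ?_
      show θ ^ 2 + θ = (((n : ℕ) : ↥L) : ℂ)
      rw [hθeq]
      norm_cast
    -- θ is integral over J'
    have hintθ : IsIntegral (↥J') θ := by
      refine ⟨Polynomial.X ^ 2 + Polynomial.X - Polynomial.C ((n : ℕ) : ↥J'), ?_, ?_⟩
      · have h12 : (Polynomial.X ^ 2 + Polynomial.X - Polynomial.C ((n : ℕ) : ↥J')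
              : Polynomial (↥J'))
            = Polynomial.X ^ (1 + 1) + (Polynomial.X - Polynomial.C ((n : ℕ) : ↥J')) := by ring
        rw [h12]
        exact Polynomial.monic_X_pow_add (by rw [Polynomial.degree_X_sub_C]; norm_num)
      · rw [show Polynomial.eval₂ (algebraMap (↥J') ℂ) θ
            (Polynomial.X ^ 2 + Polynomial.X - Polynomial.C ((n : ℕ) : ↥J'))
            = θ ^ 2 + θ - algebraMap (↥J') ℂ ((n : ℕ) : ↥J') from by
          rw [Polynomial.eval₂_sub, Polynomial.eval₂_add, Polynomial.eval₂_pow,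
            Polynomial.eval₂_X, Polynomial.eval₂_C]]
        rw [map_natCast, hθeq, sub_self]
    -- the two adjoins agree
    have h2J : (2 : ℂ) ∈ IntermediateField.adjoin (↥J') ({z} : Set ℂ) := by
      have := (IntermediateField.adjoin (↥J') ({z} : Set ℂ)).add_mem
        (IntermediateField.adjoin (↥J') ({z} : Set ℂ)).one_mem
        (IntermediateField.adjoin (↥J') ({z} : Set ℂ)).one_mem
      norm_num at this ⊢
    have hadjeq : IntermediateField.adjoin (↥J') ({θ} : Set ℂ)
        = IntermediateField.adjoin (↥J') ({z} : Set ℂ) := by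
      apply le_antisymm
      · rw [IntermediateField.adjoin_le_iff]
        intro w hw
        rw [Set.mem_singleton_iff] at hw
        subst hw
        have hzm : z ∈ IntermediateField.adjoin (↥J') ({z} : Set ℂ) :=
          IntermediateField.subset_adjoin _ _ rfl
        rw [hθ]
        exact (IntermediateField.adjoin (↥J') ({z} : Set ℂ)).div_mem
          ((IntermediateField.adjoin (↥J') ({z} : Set ℂ)).sub_mem hzm (one_mem _)) h2J
      · rw [IntermediateField.adjoin_le_iff]
        intro w hw
        rw [Set.mem_singleton_iff] at hw
        subst hw
        have hθm : θ ∈ IntermediateField.adjoin (↥J') ({θ} : Set ℂ) :=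
          IntermediateField.subset_adjoin _ _ rfl
        have hz' : z = 2 * θ + 1 := by rw [← h2θ]
        have h2J' : (2 : ℂ) ∈ IntermediateField.adjoin (↥J') ({θ} : Set ℂ) := by
          have := (IntermediateField.adjoin (↥J') ({θ} : Set ℂ)).add_mem
            (IntermediateField.adjoin (↥J') ({θ} : Set ℂ)).one_mem
            (IntermediateField.adjoin (↥J') ({θ} : Set ℂ)).one_mem
          norm_num at this ⊢
        rw [hz']
        exact add_mem (mul_mem h2J' hθm) (one_mem _)
    -- hgen
    have hgen : Algebra.adjoin (↥J') {algebraMap (𝓞 L) (↥L) t} = ⊤ := by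
      rw [eq_top_iff]
      intro w _
      have hmemL : ∀ c : ℂ, c ∈ L → c ∈ IntermediateField.adjoin (↥J') ({z} : Set ℂ) := by
        intro c hc
        rw [hL] at hc
        exact hc
      have hwv : (w : ℂ) ∈ IntermediateField.adjoin (↥J') ({θ} : Set ℂ) := by
        rw [hadjeq]
        exact hmemL _ w.2
      have hwa : (w : ℂ) ∈ Algebra.adjoin (↥J') ({θ} : Set ℂ) := by
        rw [← IntermediateField.adjoin_simple_toSubalgebra_of_isAlgebraic hintθ.isAlgebraic]
        rwa [IntermediateField.mem_toSubalgebra]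
      set φ : (↥L) →ₐ[↥J'] ℂ := IsScalarTower.toAlgHom (↥J') (↥L) ℂ with hφ
      have hmap : (Algebra.adjoin (↥J') {algebraMap (𝓞 L) (↥L) t}).map φ
          = Algebra.adjoin (↥J') ({θ} : Set ℂ) := by
        rw [AlgHom.map_adjoin]
        congr 1
        rw [Set.image_singleton]
        rfl
      rw [← hmap] at hwa
      obtain ⟨u, hu, huw⟩ := hwa
      have : u = w := by
        apply φ.toRingHom.injective
        exact huw
      rwa [← this]
    -- hodd
    have hodd : 2 * t + 1 ∉ P := by
      intro hmem
      have h2t : 2 * t ∈ P := Ideal.mul_mem_right _ _ h2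
      have h1 : (1 : 𝓞 L) ∈ P := by
        have := P.sub_mem hmem h2t
        simpa using this
      exact hP.ne_top ((Ideal.eq_top_iff_one _).mpr h1)
    -- the quadratic step
    haveI hPinst : P.IsPrime := hP
    set P' : Ideal (𝓞 J') := Ideal.comap (algebraMap (𝓞 J') (𝓞 L)) P with hP'def
    haveI hP'p : P'.IsPrime := hP.comap _
    have h2P' : (2 : 𝓞 J') ∈ P' := by
      have hm2 : algebraMap (𝓞 J') (𝓞 L) (2 : 𝓞 J') = 2 := by
        have : (2 : 𝓞 J') = 1 + 1 := by norm_num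
        rw [this, map_add, map_one]
        norm_num
      rw [hP'def, Ideal.mem_comap, hm2]
      exact h2
    have e1 : Ideal.ramificationIdx' P' P = 1 :=
      quadStep t ((n : ℕ) : 𝓞 J') hc hgen P hP h2 hodd
    have e2 : Ideal.ramificationIdx'
        (Ideal.comap (algebraMap (𝓞 K) (𝓞 J')) P') P' = 1 :=
      ih (fun i => r i.castSucc) (fun i => hr1 _) J' inferInstance rfl P' hP'p h2P'
    have comap_eq : Ideal.comap (algebraMap (𝓞 K) (𝓞 L)) P
        = Ideal.comap (algebraMap (𝓞 K) (𝓞 J')) P' := by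
      rw [hP'def, Ideal.comap_comap, ← IsScalarTower.algebraMap_eq]
    rw [comap_eq]
    have hg0 : Ideal.map (algebraMap (𝓞 J') (𝓞 L)) P' ≠ ⊥ := by
      intro hbot
      rw [Ideal.map_eq_bot_iff_of_injective
        (FaithfulSMul.algebraMap_injective (𝓞 J') (𝓞 L))] at hbot
      rw [hbot] at h2P'
      simp only [Ideal.mem_bot] at h2P'
      exact two_ne_zero h2P'
    have hfg : Ideal.map (algebraMap (𝓞 K) (𝓞 L))
        (Ideal.comap (algebraMap (𝓞 K) (𝓞 J')) P') ≠ ⊥ := by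
      intro hbot
      rw [Ideal.map_eq_bot_iff_of_injective
        (FaithfulSMul.algebraMap_injective (𝓞 K) (𝓞 L))] at hbot
      have h2m : (2 : 𝓞 K) ∈ Ideal.comap (algebraMap (𝓞 K) (𝓞 J')) P' := by
        rw [Ideal.mem_comap]
        have : algebraMap (𝓞 K) (𝓞 J') 2 = 2 := map_ofNat _ 2
        rw [this]
        exact h2P'
      rw [hbot] at h2m
      simp only [Ideal.mem_bot] at h2m
      exact two_ne_zero h2m
    have hg : Ideal.map (algebraMap (𝓞 J') (𝓞 L)) P' ≤ P := Ideal.map_comap_le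
    rw [Ideal.ramificationIdx_algebra_tower hg0 hfg hg, e1, e2]

/-- Let `q ≡ 7 (mod 8)` be prime, `K = ℚ(√−q) ⊆ ℂ`, let `r₁, …, r_k` be distinct
primes each `≡ 1 (mod 4)`, and let `J = K(√r₁, …, √r_k) ⊆ ℂ`. Then `J/K` is
unramified at the primes above 2: every prime `P` of `O_J` containing 2 has
ramification index 1 over `P ∩ O_K`. -/
theorem stmt7 (q : ℕ) (hq : q.Prime) (hq7 : q % 8 = 7)
    (K : IntermediateField ℚ ℂ) [NumberField K]
    (hdegK : Module.finrank ℚ K = 2)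
    (hα : ∃ α : K, (α : ℂ) ^ 2 = -(q : ℂ))
    (k : ℕ) (r : Fin k → ℕ) (hr : ∀ i, (r i).Prime)
    (hr1 : ∀ i, r i % 4 = 1) (hinj : Function.Injective r)
    (J : IntermediateField K ℂ) [NumberField J]
    (hJ : J = IntermediateField.adjoin K (Set.range fun i => ((Real.sqrt (r i) : ℝ) : ℂ)))
    (P : Ideal (𝓞 J)) (hP : P.IsPrime) (h2 : (2 : 𝓞 J) ∈ P) :
    Ideal.ramificationIdx'
      (Ideal.comap (algebraMap (𝓞 K) (𝓞 J)) P) P = 1 :=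
  claimB K k r hr1 J inferInstance hJ P hP h2
end
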